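/- Let p, q, r be natural numbers, let α ≠ β in Fin p, i ≠ j in Fin q, and k, l, γ, δ in Fin r with k ≠ l and γ ≠ δ, and let a₁, a₂ be nonzero complex numbers. On the index type Fin p × Fin q × Fin r define, via Kronecker products, T₁ = 1_p ⊗ E_{ij} ⊗ E_{kl} + a₁·(1_p ⊗ E_{ji} ⊗ E_{lk}) and T₂ = E_{αβ} ⊗ 1_q ⊗ E_{γδ} + a₂·(E_{βα} ⊗ 1_q ⊗ E_{δγ}). Then T₁ and T₂ commute if and only if the index sets {k, l} and {γ, δ} are disjoint (i.e., k ≠ γ, k ≠ δ, l ≠ γ and l ≠ δ). -/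

import Mathlib

open Matrix Kronecker

/-!
Since `α ≠ β` and `i ≠ j`, both `T₁ T₂` and `T₂ T₁` split into four blocks
`E_{αβ} ⊗ E_{ij}`, `E_{βα} ⊗ E_{ij}`, `E_{αβ} ⊗ E_{ji}`, `E_{βα} ⊗ E_{ji}` on the private
registers, each carrying a product of singleton matrices on the shared register.
Comparing the first two blocks shows that `T₁` and `T₂` commute only if `E_{kl}` commutes with
`E_{γδ}` and with `a₂ E_{δγ}`, which for `k ≠ l` forces `{k, l} ∩ {γ, δ} = ∅`. Conversely,
disjointness makes every product on the shared register vanish, so `T₁ T₂ = 0 = T₂ T₁`.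
-/

namespace Matrix

section Excitation

variable {R : Type*} [CommSemiring R] {ι κ ν : Type*} [DecidableEq ι] [DecidableEq κ]

theorem one_kronecker_kronecker_mul_kronecker_one_kronecker [Fintype ι] [Fintype κ] [Fintype ν]
    (A : Matrix κ κ R) (B D : Matrix ν ν R) (C : Matrix ι ι R) :
    (1 ⊗ₖ (A ⊗ₖ B)) * (C ⊗ₖ (1 ⊗ₖ D)) = C ⊗ₖ (A ⊗ₖ (B * D)) := by
  rw [← mul_kronecker_mul, ← mul_kronecker_mul, one_mul, mul_one]

theorem kronecker_one_kronecker_mul_one_kronecker_kronecker [Fintype ι] [Fintype κ] [Fintype ν]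
    (A : Matrix κ κ R) (B D : Matrix ν ν R) (C : Matrix ι ι R) :
    (C ⊗ₖ (1 ⊗ₖ D)) * (1 ⊗ₖ (A ⊗ₖ B)) = C ⊗ₖ (A ⊗ₖ (D * B)) := by
  rw [← mul_kronecker_mul, ← mul_kronecker_mul, one_mul, mul_one]

/-- The shape of a product of two excitations acting on different private registers. -/
def excitationBlocks (α β : ι) (i j : κ) (M₁ M₂ M₃ M₄ : Matrix ν ν R) :
    Matrix (ι × κ × ν) (ι × κ × ν) R :=
  single α β 1 ⊗ₖ (single i j 1 ⊗ₖ M₁) + single β α 1 ⊗ₖ (single i j 1 ⊗ₖ M₂) +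
    single α β 1 ⊗ₖ (single j i 1 ⊗ₖ M₃) + single β α 1 ⊗ₖ (single j i 1 ⊗ₖ M₄)

theorem excitation_mul_excitation [Fintype ι] [Fintype κ] [Fintype ν]
    (α β : ι) (i j : κ) (B B' D D' : Matrix ν ν R) :
    (1 ⊗ₖ (single i j 1 ⊗ₖ B) + 1 ⊗ₖ (single j i 1 ⊗ₖ B')) *
        (single α β 1 ⊗ₖ (1 ⊗ₖ D) + single β α 1 ⊗ₖ (1 ⊗ₖ D')) =
      excitationBlocks α β i j (B * D) (B * D') (B' * D) (B' * D') := by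
  simp only [add_mul, mul_add, one_kronecker_kronecker_mul_kronecker_one_kronecker,
    excitationBlocks]
  abel

theorem excitation_mul_excitation' [Fintype ι] [Fintype κ] [Fintype ν]
    (α β : ι) (i j : κ) (B B' D D' : Matrix ν ν R) :
    (single α β 1 ⊗ₖ (1 ⊗ₖ D) + single β α 1 ⊗ₖ (1 ⊗ₖ D')) *
        (1 ⊗ₖ (single i j 1 ⊗ₖ B) + 1 ⊗ₖ (single j i 1 ⊗ₖ B')) =
      excitationBlocks α β i j (D * B) (D' * B) (D * B') (D' * B') := by
  simp only [add_mul, mul_add, kronecker_one_kronecker_mul_one_kronecker_kronecker,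
    excitationBlocks]
  abel

theorem excitationBlocks_apply_left {α β : ι} {i j : κ} (hαβ : α ≠ β) (hij : i ≠ j)
    (M₁ M₂ M₃ M₄ : Matrix ν ν R) (x y : ν) :
    excitationBlocks α β i j M₁ M₂ M₃ M₄ (α, i, x) (β, j, y) = M₁ x y := by
  simp [excitationBlocks, hαβ, hαβ.symm, hij, hij.symm]

theorem excitationBlocks_apply_right {α β : ι} {i j : κ} (hαβ : α ≠ β) (hij : i ≠ j)
    (M₁ M₂ M₃ M₄ : Matrix ν ν R) (x y : ν) :
    excitationBlocks α β i j M₁ M₂ M₃ M₄ (β, i, x) (α, j, y) = M₂ x y := by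
  simp [excitationBlocks, hαβ, hαβ.symm, hij, hij.symm]

theorem eq_and_eq_of_excitationBlocks_eq {α β : ι} {i j : κ} (hαβ : α ≠ β) (hij : i ≠ j)
    {M₁ M₂ M₃ M₄ N₁ N₂ N₃ N₄ : Matrix ν ν R}
    (h : excitationBlocks α β i j M₁ M₂ M₃ M₄ = excitationBlocks α β i j N₁ N₂ N₃ N₄) :
    M₁ = N₁ ∧ M₂ = N₂ := by
  constructor <;> ext x y
  · simpa [excitationBlocks_apply_left hαβ hij] using congrFun₂ h (α, i, x) (β, j, y)
  · simpa [excitationBlocks_apply_right hαβ hij] using congrFun₂ h (β, i, x) (α, j, y)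

end Excitation

theorem commute_single_one_single_one_iff {R ν : Type*} [Semiring R] [Nontrivial R]
    [Fintype ν] [DecidableEq ν] {k l γ δ : ν} (hkl : k ≠ l) :
    Commute (single k l (1 : R)) (single γ δ 1) ↔ l ≠ γ ∧ k ≠ δ := by
  constructor
  · intro h
    constructor
    · rintro rfl
      have := congrFun₂ h.eq k δ
      simp [mul_apply, single_apply, hkl.symm] at this
    · rintro rfl
      have := congrFun₂ h.eq γ l
      simp [mul_apply, single_apply, hkl] at this
  · rintro ⟨hlγ, hkδ⟩
    rw [Commute, SemiconjBy, single_mul_single_of_ne (h := hlγ),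
      single_mul_single_of_ne (h := hkδ.symm)]

end Matrix

theorem stmt2 (p q r : ℕ) (α β : Fin p) (i j : Fin q) (k l γ δ : Fin r)
    (hαβ : α ≠ β) (hij : i ≠ j) (hkl : k ≠ l)
    (a₁ a₂ : ℂ) (ha₂ : a₂ ≠ 0)
    (T₁ T₂ : Matrix (Fin p × Fin q × Fin r) (Fin p × Fin q × Fin r) ℂ)
    (hT₁ : T₁ = (1 : Matrix (Fin p) (Fin p) ℂ) ⊗ₖ
          (single i j (1 : ℂ) ⊗ₖ single k l (1 : ℂ)) +
        a₁ • ((1 : Matrix (Fin p) (Fin p) ℂ) ⊗ₖ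
          (single j i (1 : ℂ) ⊗ₖ single l k (1 : ℂ))))
    (hT₂ : T₂ = single α β (1 : ℂ) ⊗ₖ
          ((1 : Matrix (Fin q) (Fin q) ℂ) ⊗ₖ single γ δ (1 : ℂ)) +
        a₂ • (single β α (1 : ℂ) ⊗ₖ
          ((1 : Matrix (Fin q) (Fin q) ℂ) ⊗ₖ single δ γ (1 : ℂ)))) :
    T₁ * T₂ = T₂ * T₁ ↔ (k ≠ γ ∧ k ≠ δ ∧ l ≠ γ ∧ l ≠ δ) := by
  simp only [← kronecker_smul] at hT₁ hT₂
  rw [hT₁, hT₂, excitation_mul_excitation, excitation_mul_excitation']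
  constructor
  · intro h
    obtain ⟨hγδ, hδγ⟩ := eq_and_eq_of_excitationBlocks_eq hαβ hij h
    rw [Matrix.mul_smul, Matrix.smul_mul, (smul_right_injective _ ha₂).eq_iff] at hδγ
    obtain ⟨hlγ, hkδ⟩ := (commute_single_one_single_one_iff hkl).1 hγδ
    obtain ⟨hlδ, hkγ⟩ := (commute_single_one_single_one_iff hkl).1 hδγ
    exact ⟨hkγ, hkδ, hlγ, hlδ⟩
  · rintro ⟨hkγ, hkδ, hlγ, hlδ⟩
    simp only [Matrix.mul_smul, Matrix.smul_mul, single_mul_single_of_ne, hkγ, hkδ, hlγ, hlδ,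
      hkγ.symm, hkδ.symm, hlγ.symm, hlδ.symm, Ne, not_false_eq_true, smul_zero]
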